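/- For k = 1, …, 6 let u_k = (cos((k−1)π/3), sin((k−1)π/3)) ∈ ℝ². For all positive integers i, j, the three points p = (1/(3i−1))·u_2, q = (1/(3j−1))·u_4, and s = (1/(3(i+j)−2))·u_3 are collinear. -/

import Mathlib

/-- The unit vector at angle `(k-1)π/3` from the positive x-axis. -/
noncomputable def u (k : ℕ) : EuclideanSpace ℝ (Fin 2) :=
  WithLp.toLp 2 ![Real.cos ((k - 1 : ℝ) * Real.pi / 3), Real.sin ((k - 1 : ℝ) * Real.pi / 3)]

lemma u2_eq : u 2 = WithLp.toLp 2 ![1 / 2, Real.sqrt 3 / 2] := by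
  have h : ((2 : ℕ) - 1 : ℝ) * Real.pi / 3 = Real.pi / 3 := by norm_num
  simp only [u, h, Real.cos_pi_div_three, Real.sin_pi_div_three]

lemma u4_eq : u 4 = WithLp.toLp 2 ![(-1 : ℝ), 0] := by
  have h : ((4 : ℕ) - 1 : ℝ) * Real.pi / 3 = Real.pi := by ring_nf
  simp only [u, h, Real.cos_pi, Real.sin_pi]

lemma u3_eq : u 3 = WithLp.toLp 2 ![-(1 / 2), Real.sqrt 3 / 2] := by
  have h : ((3 : ℕ) - 1 : ℝ) * Real.pi / 3 = Real.pi - Real.pi / 3 := by ring_nf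
  simp only [u, h, Real.cos_pi_sub, Real.sin_pi_sub, Real.cos_pi_div_three,
    Real.sin_pi_div_three]

theorem collinear_case_two_pi_div_three_even (i j : ℕ) (hi : 1 ≤ i) (hj : 1 ≤ j) :
    Collinear ℝ ({(1 / (3 * (i : ℝ) - 1)) • u 2, (1 / (3 * (j : ℝ) - 1)) • u 4,
      (1 / (3 * ((i : ℝ) + (j : ℝ)) - 2)) • u 3} : Set (EuclideanSpace ℝ (Fin 2))) := by
  have hi' : (1 : ℝ) ≤ (i : ℝ) := by exact_mod_cast hi
  have hj' : (1 : ℝ) ≤ (j : ℝ) := by exact_mod_cast hj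
  have ha : 3 * (i : ℝ) - 1 ≠ 0 := by nlinarith
  have hb : 3 * (j : ℝ) - 1 ≠ 0 := by nlinarith
  have hc : 3 * ((i : ℝ) + (j : ℝ)) - 2 ≠ 0 := by nlinarith
  set p : EuclideanSpace ℝ (Fin 2) := (1 / (3 * (i : ℝ) - 1)) • u 2 with hp
  set q : EuclideanSpace ℝ (Fin 2) := (1 / (3 * (j : ℝ) - 1)) • u 4 with hq
  set s : EuclideanSpace ℝ (Fin 2) := (1 / (3 * ((i : ℝ) + (j : ℝ)) - 2)) • u 3 with hs
  have hqmem : q ∈ ({p, q, s} : Set (EuclideanSpace ℝ (Fin 2))) := by simp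
  rw [collinear_iff_of_mem hqmem]
  refine ⟨p - q, ?_⟩
  intro x hx
  rcases hx with hx | hx | hx
  · exact ⟨1, by simp [hx]⟩
  · exact ⟨0, by simp [hx]⟩
  · refine ⟨(3 * (i : ℝ) - 1) / (3 * ((i : ℝ) + (j : ℝ)) - 2), ?_⟩
    subst hx
    ext k
    fin_cases k <;>
      simp only [hp, hq, hs, u2_eq, u3_eq, u4_eq, vadd_eq_add, PiLp.add_apply,
        PiLp.smul_apply, PiLp.sub_apply, PiLp.toLp_apply, Fin.zero_eta, Fin.mk_one, Matrix.cons_val_zero, Matrix.cons_val_one,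
        Matrix.head_cons, smul_eq_mul] <;>
      field_simp <;> ring
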